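/- arXiv:1605.09228 — 3 statements merged into one kernel-verified Lean document; each statement's English description precedes it below -/
import Mathlib

section
/- Let p ≥ 5 be a prime number, let ζ be a primitive (p−1)-th root of unity in the (p−1)-th cyclotomic field ℚ(ζ_{p−1}), and let α be an element of the ring of integers ℤ[ζ_{p−1}] with field norm N_{ℚ(ζ_{p−1})/ℚ}(α) = ±p. If σ is a ℚ-algebra automorphism of ℚ(ζ_{p−1}) with σ(ζ) = ζ⁻¹ (complex conjugation), then the principal ideals (α) and (σ(α)) of ℤ[ζ_{p−1}] are distinct. -/
/-!
If `(α) = (σ α)`, then `σ` preserves `(α)` and induces a ring endomorphism of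
`𝓞 K ⧸ (α)`, a ring with `p` elements, hence the identity. So `σ ζ = ζ⁻¹ ≡ ζ` modulo `α`,
whence `α ∣ ζ (σ ζ - ζ) = 1 - ζ²`. As `1 - ζ²` divides `∏_{0<k<n} (1 - ζᵏ) = n` for
`n = p - 1 > 2`, the number `p - 1` would vanish in `𝓞 K ⧸ (α)`, a ring of characteristic `p`.
-/

open NumberField

theorem ZMod.nonempty_ringEquiv_of_natCard_eq_prime {R : Type*} [Ring R] {p : ℕ}
    (hp : p.Prime) (hR : Nat.card R = p) : Nonempty (ZMod p ≃+* R) := by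
  have : Finite R := Nat.finite_of_card_ne_zero (hR ▸ hp.ne_zero)
  let _ := Fintype.ofFinite R
  exact ⟨ZMod.ringEquivOfPrime R hp (Nat.card_eq_fintype_card.symm.trans hR)⟩

theorem RingHom.eq_id_of_natCard_eq_prime {R : Type*} [Ring R] {p : ℕ} (hp : p.Prime)
    (hR : Nat.card R = p) (f : R →+* R) : f = RingHom.id R := by
  obtain ⟨e⟩ := ZMod.nonempty_ringEquiv_of_natCard_eq_prime hp hR
  have hfe : f.comp e.toRingHom = e.toRingHom := Subsingleton.elim _ _
  ext x
  simpa using congr($hfe (e.symm x))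

theorem dvd_of_natCast_eq_zero_of_natCard_eq_prime {R : Type*} [Ring R] {p : ℕ}
    (hp : p.Prime) (hR : Nat.card R = p) {n : ℕ} (hn : (n : R) = 0) : p ∣ n := by
  obtain ⟨e⟩ := ZMod.nonempty_ringEquiv_of_natCard_eq_prime hp hR
  rw [← ZMod.natCast_eq_zero_iff]
  exact e.injective (by simpa using hn)

theorem Ideal.sub_mem_of_le_comap_of_natCard_quotient_eq_prime {R : Type*} [CommRing R]
    {I : Ideal R} {p : ℕ} (hp : p.Prime) (hI : Nat.card (R ⧸ I) = p) {σ : R →+* R}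
    (hσI : I ≤ I.comap σ) (x : R) : σ x - x ∈ I := by
  rw [← Ideal.Quotient.mk_eq_mk_iff_sub_mem, ← Ideal.quotientMap_mk (H := hσI),
    RingHom.eq_id_of_natCard_eq_prime hp hI (Ideal.quotientMap I σ hσI), RingHom.id_apply]

theorem IsPrimitiveRoot.one_sub_pow_dvd_order {R : Type*} [CommRing R] [IsDomain R]
    {μ : R} {n k : ℕ} (hμ : IsPrimitiveRoot μ n) (hk : 0 < k) (hkn : k < n) :
    1 - μ ^ k ∣ (n : R) := by
  obtain ⟨m, rfl⟩ := Nat.exists_eq_add_one_of_ne_zero (by omega : n ≠ 0)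
  obtain ⟨j, rfl⟩ := Nat.exists_eq_add_one_of_ne_zero hk.ne'
  rw [Nat.cast_succ, ← hμ.prod_one_sub_pow_eq_order]
  exact Finset.dvd_prod_of_mem _ (Finset.mem_range.mpr (by omega))

theorem Ideal.prime_dvd_order_of_le_comap {R : Type*} [CommRing R] [IsDomain R]
    {I : Ideal R} {p : ℕ} (hp : p.Prime) (hI : Nat.card (R ⧸ I) = p) {σ : R →+* R}
    (hσI : I ≤ I.comap σ) {μ : R} {n : ℕ} (hμ : IsPrimitiveRoot μ n) (hn : 2 < n)
    (hσμ : σ μ * μ = 1) : p ∣ n := by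
  have hμ2 : 1 - μ ^ 2 ∈ I := by
    have hfix := I.mul_mem_left μ (I.sub_mem_of_le_comap_of_natCard_quotient_eq_prime hp hI hσI μ)
    convert hfix using 1
    linear_combination -hσμ
  have hnI : (n : R) ∈ I := I.mem_of_dvd (hμ.one_sub_pow_dvd_order two_pos hn) hμ2
  refine dvd_of_natCast_eq_zero_of_natCard_eq_prime hp hI ?_
  rwa [← map_natCast (Ideal.Quotient.mk I), Ideal.Quotient.eq_zero_iff_mem]

theorem NumberField.natCard_quotient_span_singleton {K : Type*} [Field K] [NumberField K]
    (α : 𝓞 K) : Nat.card (𝓞 K ⧸ Ideal.span {α}) = (Algebra.norm ℤ α).natAbs := by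
  rw [← Submodule.cardQuot_apply, ← Ideal.absNorm_apply, Ideal.absNorm_span_singleton]

theorem NumberField.span_singleton_ne_span_map_of_isPrimitiveRoot {K : Type*} [Field K]
    [NumberField K] {p n : ℕ} (hp : p.Prime) (hpn : ¬p ∣ n) (hn : 2 < n) {ζ : K}
    (hζ : IsPrimitiveRoot ζ n) {σ : K →+* K} (hσ : σ ζ = ζ⁻¹) {α β : 𝓞 K}
    (hα : (Algebra.norm ℤ α).natAbs = p) (hβ : (β : K) = σ α) :
    Ideal.span {α} ≠ Ideal.span {β} := by
  intro hαβ
  have : NeZero n := NeZero.of_gt hn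
  let σ' := RingOfIntegers.mapRingHom σ
  have hσ'I : Ideal.span {α} ≤ (Ideal.span {α}).comap σ' := by
    rw [Ideal.span_le, Set.singleton_subset_iff, SetLike.mem_coe, Ideal.mem_comap, hαβ,
      show σ' α = β from RingOfIntegers.ext hβ.symm]
    exact Ideal.mem_span_singleton_self β
  refine hpn (Ideal.prime_dvd_order_of_le_comap hp
    ((natCard_quotient_span_singleton α).trans hα) hσ'I hζ.toInteger_isPrimitiveRoot hn ?_)
  apply RingOfIntegers.ext
  change σ ζ * ζ = 1
  rw [hσ, inv_mul_cancel₀ (hζ.ne_zero (by omega))]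

/-- Let `p ≥ 5` be prime, `ζ` a primitive `(p-1)`-th root of unity in the `(p-1)`-th
cyclotomic field, and `α` an element of the ring of integers `ℤ[ζ_{p-1}]` of field norm
`±p`.  If `σ` is the `ℚ`-automorphism of `ℚ(ζ_{p-1})` with `σ(ζ) = ζ⁻¹` (complex
conjugation) and `β` is the image of `α` under `σ` (as an element of the ring of
integers), then the principal ideals `(α)` and `(β) = (σ(α))` are distinct. -/
theorem span_ne_span_conj
    (p : ℕ) (hp : p.Prime) (hp5 : 5 ≤ p)
    (ζ : CyclotomicField (p - 1) ℚ)
    (hζ : IsPrimitiveRoot ζ (p - 1))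
    (α : 𝓞 (CyclotomicField (p - 1) ℚ))
    (hα : Algebra.norm ℚ (α : CyclotomicField (p - 1) ℚ) = (p : ℚ) ∨
      Algebra.norm ℚ (α : CyclotomicField (p - 1) ℚ) = -(p : ℚ))
    (σ : CyclotomicField (p - 1) ℚ ≃ₐ[ℚ]
      CyclotomicField (p - 1) ℚ)
    (hσ : σ ζ = ζ⁻¹)
    (β : 𝓞 (CyclotomicField (p - 1) ℚ))
    (hβ : (β : CyclotomicField (p - 1) ℚ) =
      σ (α : CyclotomicField (p - 1) ℚ)) :
    Ideal.span {α} ≠ Ideal.span {β} := by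
  have : NeZero (p - 1) := ⟨by omega⟩
  have hα' : (Algebra.norm ℤ α).natAbs = p := by
    rw [← Algebra.coe_norm_int] at hα
    exact Int.natAbs_eq_iff.mpr (by exact_mod_cast hα)
  have hpn : ¬p ∣ p - 1 := Nat.not_dvd_of_pos_of_lt (by omega) (by omega)
  exact span_singleton_ne_span_map_of_isPrimitiveRoot hp hpn (by omega) hζ
    (σ := (σ : _ →+* _)) hσ hα' hβ
end

section
/- Let C ≈ 0.57721 denote the Euler–Mascheroni constant and define, for real x, f(x) = (log(x)/(x−1))·(e^C·log(log(x−1)) + 5/(2·log(log(x−1)))). Then f is strictly decreasing on the interval (43, ∞). -/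
/-!
Write `f = e^γ · (g · L) + 5/2 · (g / L)` with `g x = log x / (x - 1)` and
`L x = log (log (x - 1))`. On `(1, ∞)` the function `g` is positive and decreasing, since
`g'` has the sign of `1 - 1/x - log x < 0`; beyond `e + 1` the function `L` is positive and
increasing, so `g / L` decreases. The derivative of `g · L` has the sign of
`L · ((x - 1)/x - log x) + log x / log (x - 1)`, which is negative as soon as `L > 1`,
i.e. for `x > e^e + 1 ≈ 16.2`.
-/

open Real Set

lemma strictAntiOn_of_hasDerivAt_neg {D : Set ℝ} (hD : Convex ℝ D) {f f' : ℝ → ℝ}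
    (hf : ∀ x ∈ D, HasDerivAt f (f' x) x) (hf' : ∀ x ∈ D, f' x < 0) : StrictAntiOn f D :=
  strictAntiOn_of_hasDerivWithinAt_neg hD (fun x hx ↦ (hf x hx).continuousAt.continuousWithinAt)
    (fun x hx ↦ (hf x (interior_subset hx)).hasDerivWithinAt)
    (fun x hx ↦ hf' x (interior_subset hx))

lemma hasDerivAt_log_div_sub_one {x : ℝ} (hx : 1 < x) :
    HasDerivAt (fun x ↦ log x / (x - 1)) (((x - 1) / x - log x) / (x - 1) ^ 2) x := by
  have hx0 : x ≠ 0 := by positivity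
  refine ((hasDerivAt_log hx0).div ((hasDerivAt_id' x).sub_const 1)
    (sub_pos.2 hx).ne').congr_deriv ?_
  field_simp

lemma hasDerivAt_log_log_sub_one {x : ℝ} (hx : 2 < x) :
    HasDerivAt (fun x ↦ log (log (x - 1))) (1 / (log (x - 1) * (x - 1))) x := by
  have hx1 : 0 < x - 1 := by linarith
  have hl : 0 < log (x - 1) := log_pos (by linarith)
  refine (((hasDerivAt_id' x).sub_const 1).log hx1.ne' |>.log hl.ne').congr_deriv ?_
  field_simp

lemma log_div_sub_one_pos {x : ℝ} (hx : 1 < x) : 0 < log x / (x - 1) :=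
  div_pos (log_pos hx) (sub_pos.2 hx)

lemma strictAntiOn_log_div_sub_one : StrictAntiOn (fun x ↦ log x / (x - 1)) (Ioi 1) := by
  refine strictAntiOn_of_hasDerivAt_neg (convex_Ioi 1) (fun x hx ↦ hasDerivAt_log_div_sub_one hx)
    fun x (hx : 1 < x) ↦ div_neg_of_neg_of_pos ?_ (by nlinarith)
  have hx0 : 0 < x := by positivity
  have hlog_inv := log_lt_sub_one_of_pos (inv_pos.2 hx0) (inv_ne_one.2 hx.ne')
  rw [log_inv] at hlog_inv
  rw [sub_div, div_self hx0.ne', one_div]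
  linarith

lemma strictMonoOn_log_log_sub_one : StrictMonoOn (fun x ↦ log (log (x - 1))) (Ioi 2) := by
  intro a (ha : 2 < a) b _ hab
  exact log_lt_log (log_pos (by linarith)) (log_lt_log (by linarith) (by linarith))

lemma strictAntiOn_log_div_sub_one_div_log_log :
    StrictAntiOn (fun x ↦ log x / (x - 1) / log (log (x - 1))) (Ioi (exp 1 + 1)) := by
  intro a (ha : exp 1 + 1 < a) b (hb : exp 1 + 1 < b) hab
  have h2 : (2 : ℝ) < exp 1 + 1 := by linarith [add_one_lt_exp one_ne_zero]
  have hLa : 0 < log (log (a - 1)) :=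
    log_pos ((lt_log_iff_exp_lt (by linarith)).2 (by linarith))
  exact div_lt_div₀
    (strictAntiOn_log_div_sub_one (mem_Ioi.2 (by linarith)) (mem_Ioi.2 (by linarith)) hab)
    (strictMonoOn_log_log_sub_one (mem_Ioi.2 (by linarith)) (mem_Ioi.2 (by linarith)) hab).le
    (log_div_sub_one_pos (by linarith)).le hLa

lemma strictAntiOn_log_div_sub_one_mul_log_log :
    StrictAntiOn (fun x ↦ log x / (x - 1) * log (log (x - 1))) (Ioi (exp (exp 1) + 1)) := by
  have he : 2 < exp 1 := by linarith [add_one_lt_exp one_ne_zero]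
  have hee : exp 1 < exp (exp 1) := exp_lt_exp.2 (by linarith)
  refine strictAntiOn_of_hasDerivAt_neg (convex_Ioi _)
    (fun x (hx : _ < x) ↦ (hasDerivAt_log_div_sub_one (by linarith)).mul
      (hasDerivAt_log_log_sub_one (by linarith))) fun x (hx : _ < x) ↦ ?_
  have hx1 : 0 < x - 1 := by linarith
  have hl1 : exp 1 < log (x - 1) := (lt_log_iff_exp_lt hx1).2 (by linarith)
  have hL : 1 < log (log (x - 1)) := (lt_log_iff_exp_lt (by linarith)).2 hl1
  have hl : log (x - 1) < log x := log_lt_log hx1 (by linarith)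
  have hfrac : (x - 1) / x < 1 := (div_lt_one (by linarith)).2 (by linarith)
  have hlog : log x / log (x - 1) < (log x - 1) * log (log (x - 1)) := by
    rw [div_lt_iff₀ (by linarith)]
    -- `(log x - 1) (log (x - 1) - 1) > 1` because both factors exceed `e - 1 > 1`
    have h1 : log x ≤ (log x - 1) * log (x - 1) := by nlinarith
    have h2 : 0 < (log x - 1) * log (x - 1) := by nlinarith
    nlinarith
  have key : log (log (x - 1)) * ((x - 1) / x - log x) + log x / log (x - 1) < 0 := by
    nlinarith
  have hl1_ne : log (x - 1) ≠ 0 := by linarith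
  calc ((x - 1) / x - log x) / (x - 1) ^ 2 * log (log (x - 1))
        + log x / (x - 1) * (1 / (log (x - 1) * (x - 1)))
      = (log (log (x - 1)) * ((x - 1) / x - log x) + log x / log (x - 1)) / (x - 1) ^ 2 := by
        field_simp
    _ < 0 := div_neg_of_neg_of_pos key (by positivity)

lemma exp_exp_one_lt : exp (exp 1) < 27 := by
  have he : exp 1 < 3 := exp_one_lt_d9.trans (by norm_num)
  have hcube : exp (exp 1) < exp 1 ^ 3 := by
    rw [← exp_nat_mul, Nat.cast_ofNat, mul_one]
    exact exp_lt_exp.2 he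
  have : exp 1 ^ 3 < 3 ^ 3 := pow_lt_pow_left₀ he (exp_pos 1).le (by norm_num)
  linarith

/-- The function
`f(x) = (log x / (x - 1)) · (e^γ · log (log (x - 1)) + 5 / (2 · log (log (x - 1))))`,
where `γ` is the Euler–Mascheroni constant, is strictly decreasing on `(43, ∞)`. -/
theorem f_strictAntiOn_Ioi_43 :
    StrictAntiOn (fun x : ℝ =>
      (Real.log x / (x - 1)) *
        (Real.exp Real.eulerMascheroniConstant * Real.log (Real.log (x - 1)) +
          5 / (2 * Real.log (Real.log (x - 1)))))
      (Set.Ioi (43 : ℝ)) := by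
  have hmul := strictAntiOn_log_div_sub_one_mul_log_log.mono
    (Ioi_subset_Ioi (show exp (exp 1) + 1 ≤ 43 by linarith [exp_exp_one_lt]))
  have hdiv := strictAntiOn_log_div_sub_one_div_log_log.mono
    (Ioi_subset_Ioi (show exp 1 + 1 ≤ 43 by linarith [exp_one_lt_d9]))
  have hsplit (g L : ℝ) : g * (exp eulerMascheroniConstant * L + 5 / (2 * L)) =
      exp eulerMascheroniConstant * (g * L) + 5 / 2 * (g / L) := by ring
  intro a ha b hb hab
  simp only [hsplit]
  exact add_lt_add_of_lt_of_le (mul_lt_mul_of_pos_left (hmul ha hb hab) (exp_pos _))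
    (mul_le_mul_of_nonneg_left (hdiv ha hb hab).le (by norm_num))
end

section
/- Let C ≈ 0.57721 denote the Euler–Mascheroni constant and define, for real x, f(x) = (log(x)/(x−1))·(e^C·log(log(x−1)) + 5/(2·log(log(x−1)))). Then for every real number x ≥ 173 one has f(x) < log(5)/12. -/
/-!
Put `u = x - 1`, `t = log u` and `a = e^γ`. Since `log (u + 1) ≤ log u + 1 / u`, the left-hand
side is at most `(1 + 1 / (u log u)) · majorant a t`, where `majorant a t` is the same expression
with `log x` replaced by `log (x - 1)`. As `majorant a` decreases for `t ≥ e`, everything reduces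
to bounding `majorant a (log 172) = log 172 / 172 · (a log log 172 + …)` numerically,
from Taylor bounds for `exp`, `log 2` and `γ < H₆₄ - log 64`.
-/

open Real Finset
open scoped Nat

theorem lt_log_of_taylor_lt (n : ℕ) {r y : ℝ} (hr₀ : 0 ≤ r) (hr₁ : r ≤ 1)
    (h : 2.7182818286 ^ n * (∑ i ∈ range 8, r ^ i / i ! + r ^ 8 * 9 / (8 ! * 8)) < y) :
    n + r < log y := by
  have hy : 0 < y := lt_of_le_of_lt (by positivity) h
  rw [lt_log_iff_exp_lt hy, exp_add, ← exp_one_pow]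
  refine lt_of_le_of_lt ?_ h
  gcongr
  · exact exp_one_lt_d9.le
  · exact (exp_bound' hr₀ hr₁ (n := 8) (by norm_num)).trans_eq (by norm_num)

theorem log_lt_of_lt_taylor (n : ℕ) {r y : ℝ} (hy : 0 < y) (hr₀ : 0 ≤ r)
    (h : y < 2.7182818283 ^ n * ∑ i ∈ range 8, r ^ i / i !) :
    log y < n + r := by
  rw [log_lt_iff_lt_exp hy, exp_add, ← exp_one_pow]
  refine h.trans_le ?_
  gcongr
  · exact exp_one_gt_d9.le
  · exact sum_le_exp_of_nonneg hr₀ 8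

theorem log_five_gt : 1.6093 < log 5 := by
  have := lt_log_of_taylor_lt 1 (r := 0.6093) (y := 5) (by norm_num) (by norm_num)
    (by norm_num [sum_range_succ, Nat.factorial])
  norm_num at this
  linarith

theorem log_172_gt : 5.147 < log 172 := by
  have := lt_log_of_taylor_lt 5 (r := 0.147) (y := 172) (by norm_num) (by norm_num)
    (by norm_num [sum_range_succ, Nat.factorial])
  norm_num at this
  linarith

theorem log_172_lt : log 172 < 5.1478 := by
  have := log_lt_of_lt_taylor 5 (r := 0.1478) (y := 172) (by norm_num) (by norm_num)
    (by norm_num [sum_range_succ, Nat.factorial])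
  norm_num at this
  linarith

theorem log_log_172_gt : 1.6383 < log (log 172) := by
  have := lt_log_of_taylor_lt 1 (r := 0.6383) (y := 5.147) (by norm_num) (by norm_num)
    (by norm_num [sum_range_succ, Nat.factorial])
  have := log_lt_log (by norm_num) log_172_gt
  norm_num at *
  linarith

theorem log_log_172_lt : log (log 172) < 1.639 := by
  have := log_lt_of_lt_taylor 1 (r := 0.639) (y := 5.1478) (by norm_num) (by norm_num)
    (by norm_num [sum_range_succ, Nat.factorial])
  have := log_lt_log (by linarith [log_172_gt]) log_172_lt
  norm_num at *
  linarith

theorem eulerMascheroniConstant_lt : eulerMascheroniConstant < 0.58501 := by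
  have hγ := eulerMascheroniConstant_lt_eulerMascheroniSeq' 64
  have h64 : eulerMascheroniSeq' 64 = (harmonic 64 : ℝ) - 6 * log 2 := by
    rw [eulerMascheroniSeq', if_neg (by norm_num), show ((64 : ℕ) : ℝ) = 2 ^ 6 by norm_num,
      Real.log_pow]
    norm_num
  have hH : ((harmonic 64 : ℚ) : ℝ) < 4.7438910 := by
    have : harmonic 64 < (4.7438910 : ℚ) := by norm_num [harmonic, sum_range_succ]
    exact (Rat.cast_lt.mpr this).trans_eq (by norm_num)
  linarith [log_two_gt_d9]

theorem exp_eulerMascheroniConstant_lt : exp eulerMascheroniConstant < 1.796 := by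
  have := lt_log_of_taylor_lt 0 (r := 0.58501) (y := 1.796) (by norm_num) (by norm_num)
    (by norm_num [sum_range_succ, Nat.factorial])
  rw [← lt_log_iff_exp_lt (by norm_num)]
  norm_num at this
  linarith [eulerMascheroniConstant_lt]

theorem log_add_one_le_log_add_inv {u : ℝ} (hu : 0 < u) : log (u + 1) ≤ log u + u⁻¹ := by
  have h := log_le_sub_one_of_pos (show 0 < (u + 1) / u by positivity)
  rw [log_div (by positivity) hu.ne', show (u + 1) / u - 1 = u⁻¹ by field_simp; ring] at h
  linarith

noncomputable def majorant (a t : ℝ) : ℝ :=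
  t * exp (-t) * (a * log t + 5 / (2 * log t))

theorem majorant_nonneg {a t : ℝ} (ha : 0 ≤ a) (ht : 1 ≤ t) : 0 ≤ majorant a t := by
  have hL : 0 ≤ log t := log_nonneg ht
  unfold majorant
  positivity

theorem log_add_one_div_mul_le_majorant {a u : ℝ} (ha : 0 ≤ a) (hu : exp 1 < u) :
    log (u + 1) / u * (a * log (log u) + 5 / (2 * log (log u))) ≤
      (1 + (u * log u)⁻¹) * majorant a (log u) := by
  have hu₀ : 0 < u := (exp_pos 1).trans hu
  have hL : 1 < log u := (lt_log_iff_exp_lt hu₀).mpr hu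
  have hB : 0 ≤ a * log (log u) + 5 / (2 * log (log u)) := by
    have := log_pos hL
    positivity
  have hlog : log (u + 1) ≤ (1 + (u * log u)⁻¹) * log u := by
    rw [add_mul, one_mul, mul_inv, mul_assoc, inv_mul_cancel₀ (by positivity), mul_one]
    exact log_add_one_le_log_add_inv hu₀
  rw [majorant, exp_neg, exp_log hu₀]
  calc log (u + 1) / u * (a * log (log u) + 5 / (2 * log (log u)))
      ≤ (1 + (u * log u)⁻¹) * log u / u * (a * log (log u) + 5 / (2 * log (log u))) := by
        gcongr
    _ = _ := by ring

theorem hasDerivAt_majorant (a : ℝ) {t : ℝ} (ht : 1 < t) :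
    HasDerivAt (majorant a)
      (exp (-t) * ((1 - t) * (a * log t + 5 / (2 * log t)) + a - 5 / (2 * log t ^ 2))) t := by
  have ht₀ : t ≠ 0 := by positivity
  have hL : log t ≠ 0 := (log_pos ht).ne'
  have hB := ((hasDerivAt_log ht₀).const_mul a).add
    ((hasDerivAt_const t (5 : ℝ)).div ((hasDerivAt_log ht₀).const_mul 2) (by positivity))
  refine (((hasDerivAt_id' t).mul (hasDerivAt_neg t).exp).mul hB).congr_deriv ?_
  simp only [Pi.mul_apply, Pi.add_apply, Pi.div_apply]
  field_simp
  ring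

theorem majorant_antitoneOn {a : ℝ} (ha : 0 ≤ a) : AntitoneOn (majorant a) (Set.Ici (exp 1)) := by
  have one_lt : ∀ t ∈ Set.Ici (exp 1), 1 < t := fun t ht ↦
    (one_lt_exp_iff.mpr one_pos).trans_le ht
  refine antitoneOn_of_deriv_nonpos (convex_Ici _)
    (fun t ht ↦ (hasDerivAt_majorant a (one_lt t ht)).continuousAt.continuousWithinAt)
    (fun t ht ↦ (hasDerivAt_majorant a (one_lt t (interior_subset ht))).differentiableAt
      |>.differentiableWithinAt) fun t ht ↦ ?_
  rw [interior_Ici] at ht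
  have ht₀ : 0 < t := (exp_pos 1).trans ht
  have hL : 1 ≤ log t := (le_log_iff_exp_le ht₀).mpr ht.le
  have ht₂ : 2 < t := exp_one_gt_two.trans ht
  rw [(hasDerivAt_majorant a (one_lt t (Set.mem_Ici.mpr ht.le))).deriv]
  refine mul_nonpos_of_nonneg_of_nonpos (exp_pos _).le ?_
  have h₁ : 0 ≤ 5 / (2 * log t) := by positivity
  have h₂ : 0 ≤ 5 / (2 * log t ^ 2) := by positivity
  nlinarith [mul_le_mul_of_nonneg_left hL ha]

theorem majorant_log_172_lt {a : ℝ} (ha₀ : 0 ≤ a) (ha : a < 1.796) :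
    801 / 800 * majorant a (log 172) < log 5 / 12 := by
  have h₁ := log_172_gt
  have h₂ := log_172_lt
  have h₃ := log_log_172_gt
  have h₄ := log_log_172_lt
  have hB : a * log (log 172) + 5 / (2 * log (log 172)) < 1.796 * 1.639 + 5 / (2 * 1.6383) := by
    gcongr
  rw [majorant, exp_neg, exp_log (by norm_num)]
  calc 801 / 800 * (log 172 * 172⁻¹ * (a * log (log 172) + 5 / (2 * log (log 172))))
      < 801 / 800 * (5.1478 * 172⁻¹ * (1.796 * 1.639 + 5 / (2 * 1.6383))) := by
        gcongr
    _ < 1.6093 / 12 := by norm_num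
    _ < log 5 / 12 := by linarith [log_five_gt]

/-- For every real `x ≥ 173`, the function
`f(x) = (log x / (x - 1)) · (e^γ · log (log (x - 1)) + 5 / (2 · log (log (x - 1))))`,
where `γ` is the Euler–Mascheroni constant, satisfies `f(x) < log 5 / 12`. -/
theorem f_lt_of_173_le (x : ℝ) (hx : 173 ≤ x) :
    (Real.log x / (x - 1)) *
        (Real.exp Real.eulerMascheroniConstant * Real.log (Real.log (x - 1)) +
          5 / (2 * Real.log (Real.log (x - 1)))) < Real.log 5 / 12 := by
  obtain ⟨u, rfl⟩ : ∃ u, x = u + 1 := ⟨x - 1, by ring⟩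
  rw [add_sub_cancel_right]
  have hu : 172 ≤ u := by linarith
  have ha := (exp_pos eulerMascheroniConstant).le
  have he : exp 1 < log 172 := by linarith [exp_one_lt_d9, log_172_gt]
  have hlog : log 172 ≤ log u := log_le_log (by norm_num) hu
  have hfactor : 1 + (u * log u)⁻¹ ≤ 801 / 800 := by
    have : 800 ≤ u * log u := by nlinarith [log_172_gt]
    have : (u * log u)⁻¹ ≤ 800⁻¹ := inv_anti₀ (by norm_num) this
    linarith
  calc _ ≤ (1 + (u * log u)⁻¹) * majorant (exp eulerMascheroniConstant) (log u) :=
        log_add_one_div_mul_le_majorant ha (by linarith [exp_one_lt_d9])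
    _ ≤ 801 / 800 * majorant (exp eulerMascheroniConstant) (log 172) :=
        mul_le_mul hfactor (majorant_antitoneOn ha he.le (he.le.trans hlog) hlog)
          (majorant_nonneg ha (by linarith [exp_one_gt_two])) (by norm_num)
    _ < log 5 / 12 := majorant_log_172_lt ha exp_eulerMascheroniConstant_lt
end
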